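/- arXiv:1810.11685 — 4 statements merged into one kernel-verified Lean document; each statement's English description precedes it below -/
import Mathlib

section
/- Let E and F be finite-dimensional real inner product spaces, T : E → E and M : E → F linear maps, and N ≥ 1 a natural number. Given a source sequence S : Fin N → E, define the state sequence z by z 0 = S 0 and z (n+1) = T (z n) + S (n+1), and the forward operator L : (Fin N → E) → (Fin N → F) by (L S) n = M (z n). Let T* : E → E and M* : F → E denote the Hilbert-space adjoints of T and M. For any data sequence P : Fin N → F, define the time-reversed adjoint state w : Fin N → E by w 0 = M*(P (N−1)) and w (m+1) = T*(w m) + M*(P (N−2−m)). Then for every S : Fin N → E and P : Fin N → F one has ⟨L S, P⟩ = Σ_{n=0}^{N−1} ⟨S n, w (N−1−n)⟩; equivalently, the adjoint L* of L with respect to the componentwise-sum inner products satisfies (L* P) n = w (N−1−n) for all n. -/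
open scoped RealInnerProductSpace

/-- Adjoint of the discretised acoustic time-stepping forward operator:
for the forward recursion `z 0 = S 0`, `z (n+1) = T (z n) + S (n+1)` with measurements
`(L S) n = M (z n)`, and the time-reversed adjoint recursion
`w 0 = M* (P (N-1))`, `w (m+1) = T* (w m) + M* (P (N-2-m))`, one has
`⟨L S, P⟩ = ∑ n, ⟨S n, w (N-1-n)⟩` for the componentwise-sum inner products. -/
theorem acoustic_adjoint_timeReversal
    (E F : Type*)
    [NormedAddCommGroup E] [InnerProductSpace ℝ E] [FiniteDimensional ℝ E]
    [NormedAddCommGroup F] [InnerProductSpace ℝ F] [FiniteDimensional ℝ F]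
    (T : E →ₗ[ℝ] E) (M : E →ₗ[ℝ] F) (N : ℕ) (hN : 1 ≤ N)
    (z : (Fin N → E) → ℕ → E) (w : (Fin N → F) → ℕ → E)
    (hz0 : ∀ S : Fin N → E, z S 0 = S ⟨0, hN⟩)
    (hz : ∀ (S : Fin N → E) (n : ℕ) (h : n + 1 < N),
      z S (n + 1) = T (z S n) + S ⟨n + 1, h⟩)
    (hw0 : ∀ P : Fin N → F,
      w P 0 = (LinearMap.adjoint M) (P ⟨N - 1, by omega⟩))
    (hw : ∀ (P : Fin N → F) (m : ℕ),
      w P (m + 1) = (LinearMap.adjoint T) (w P m) +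
        (LinearMap.adjoint M) (P ⟨N - 2 - m, by omega⟩)) :
    ∀ (S : Fin N → E) (P : Fin N → F),
      ∑ n : Fin N, ⟪M (z S n), P n⟫ =
        ∑ n : Fin N, ⟪S n, w P (N - 1 - (n : ℕ))⟫ := by
  intro S P
  classical
  set S' : ℕ → E := fun j => if h : j < N then S ⟨j, h⟩ else 0 with hS'
  set q : ℕ → E := fun k => if h : k < N then (LinearMap.adjoint M) (P ⟨k, h⟩) else 0 with hq
  -- closed form for z
  have hzA : ∀ n, n < N → z S n = ∑ j ∈ Finset.range (n + 1), (T ^ (n - j)) (S' j) := by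
    intro n
    induction n with
    | zero =>
      intro h
      simp [hz0, hS', h]
    | succ n ih =>
      intro h
      have hn : n < N := by omega
      rw [hz S n h, ih hn, map_sum]
      conv_rhs => rw [Finset.sum_range_succ]
      congr 1
      · refine Finset.sum_congr rfl fun j hj => ?_
        have hj' : j ≤ n := by simpa [Nat.lt_succ_iff] using hj
        have hexp : n + 1 - j = (n - j) + 1 := by omega
        rw [hexp, pow_succ', Module.End.mul_apply]
      · have h0 : n + 1 - (n + 1) = 0 := by omega
        simp [h0, hS', h]
  -- closed form for w
  have hwB : ∀ m, m < N → w P m =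
      ∑ i ∈ Finset.range (m + 1), ((LinearMap.adjoint T) ^ i) (q (N - 1 - m + i)) := by
    intro m
    induction m with
    | zero =>
      intro h
      simp [hw0, hq, show N - 1 < N by omega]
    | succ m ih =>
      intro h
      have hm : m < N := by omega
      rw [hw P m, ih hm, map_sum]
      conv_rhs => rw [Finset.sum_range_succ']
      congr 1
      · refine Finset.sum_congr rfl fun i hi => ?_
        have harg : N - 1 - (m + 1) + (i + 1) = N - 1 - m + i := by omega
        rw [harg, pow_succ', Module.End.mul_apply]
      · have h1 : N - 1 - (m + 1) + 0 = N - 2 - m := by omega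
        rw [h1]
        simp [hq, show N - 2 - m < N by omega]
  have hL : ∑ n : Fin N, ⟪M (z S n), P n⟫
      = ∑ k ∈ Finset.Ico 0 N, ∑ j ∈ Finset.Ico 0 (k + 1),
          ⟪(T ^ (k - j)) (S' j), q k⟫ := by
    have h1 : ∀ n : Fin N, ⟪M (z S n), P n⟫ = ⟪z S n, q n⟫ := by
      intro n
      rw [hq]
      simp only [n.isLt, dif_pos, Fin.eta]
      rw [LinearMap.adjoint_inner_right]
    rw [Finset.sum_congr rfl fun n _ => h1 n,
      Fin.sum_univ_eq_sum_range (fun k => ⟪z S k, q k⟫) N]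
    simp only [Finset.range_eq_Ico]
    refine Finset.sum_congr rfl fun k hk => ?_
    have hkN : k < N := (Finset.mem_Ico.mp hk).2
    rw [hzA k hkN, sum_inner, Finset.range_eq_Ico]
  have hR : ∑ n : Fin N, ⟪S n, w P (N - 1 - (n : ℕ))⟫
      = ∑ j ∈ Finset.Ico 0 N, ∑ k ∈ Finset.Ico j N,
          ⟪(T ^ (k - j)) (S' j), q k⟫ := by
    have h1 : ∀ n : Fin N, ⟪S n, w P (N - 1 - (n : ℕ))⟫
        = ⟪S' (n : ℕ), w P (N - 1 - (n : ℕ))⟫ := by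
      intro n; rw [hS']; simp [n.isLt]
    rw [Finset.sum_congr rfl fun n _ => h1 n,
      Fin.sum_univ_eq_sum_range (fun j => ⟪S' j, w P (N - 1 - j)⟫) N]
    simp only [Finset.range_eq_Ico]
    refine Finset.sum_congr rfl fun j hj => ?_
    have hjN : j < N := (Finset.mem_Ico.mp hj).2
    rw [hwB (N - 1 - j) (by omega), inner_sum]
    have hcnt : N - 1 - j + 1 = N - j := by omega
    have hidx : N - 1 - (N - 1 - j) = j := by omega
    rw [hcnt, hidx, Finset.sum_Ico_eq_sum_range]
    refine Finset.sum_congr rfl fun i hi => ?_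
    have hii : j + i - j = i := by omega
    rw [hii]
    have hpow : (LinearMap.adjoint T) ^ i = LinearMap.adjoint (T ^ i) := (star_pow T i).symm
    rw [hpow, LinearMap.adjoint_inner_right]
  rw [hL, hR]
  exact (Finset.sum_Ico_Ico_comm 0 N fun j k => ⟪(T ^ (k - j)) (S' j), q k⟫).symm
end

section
/- Let E and F be finite-dimensional real inner product spaces, T : E → E and M : E → F linear maps, and N ≥ 1 a natural number. Define the forward operator L : (Fin N → E) → (Fin N → F) by (L S) n = Σ_{m=0}^{n} M (T^{n−m} (S m)). Then the adjoint L* of L with respect to the componentwise-sum inner products is given explicitly by (L* P) n = Σ_{m=n}^{N−1} (T*)^{m−n} (M* (P m)) for all P : Fin N → F and all n, where T* and M* are the adjoints of T and M. -/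
open scoped RealInnerProductSpace

/-- Explicit adjoint of the discretised acoustic forward operator
`(L S) n = ∑_{m=0}^{n} M (T^(n-m) (S m))`: with respect to the componentwise-sum
inner products, its adjoint is `(L* P) n = ∑_{m=n}^{N-1} (T*)^(m-n) (M* (P m))`. -/
theorem acoustic_forward_explicit_adjoint
    (E F : Type*)
    [NormedAddCommGroup E] [InnerProductSpace ℝ E] [FiniteDimensional ℝ E]
    [NormedAddCommGroup F] [InnerProductSpace ℝ F] [FiniteDimensional ℝ F]
    (T : E →ₗ[ℝ] E) (M : E →ₗ[ℝ] F) (N : ℕ) (hN : 1 ≤ N) :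
    ∀ (S : Fin N → E) (P : Fin N → F),
      ∑ n : Fin N,
          ⟪∑ m ∈ Finset.univ.filter (fun m : Fin N => m ≤ n),
              M ((T ^ ((n : ℕ) - (m : ℕ))) (S m)), P n⟫ =
        ∑ n : Fin N,
          ⟪S n, ∑ m ∈ Finset.univ.filter (fun m : Fin N => n ≤ m),
              ((LinearMap.adjoint T) ^ ((m : ℕ) - (n : ℕ)))
                ((LinearMap.adjoint M) (P m))⟫ := by
  intro S P
  have key : ∀ (n m : Fin N), ⟪M ((T ^ ((n:ℕ)-(m:ℕ))) (S m)), P n⟫ =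
      ⟪S m, ((LinearMap.adjoint T) ^ ((n:ℕ)-(m:ℕ))) ((LinearMap.adjoint M) (P n))⟫ := by
    intro n m
    have hpow : (LinearMap.adjoint T) ^ ((n:ℕ)-(m:ℕ)) = LinearMap.adjoint (T ^ ((n:ℕ)-(m:ℕ))) := by
      rw [← LinearMap.star_eq_adjoint, ← LinearMap.star_eq_adjoint, ← star_pow]
    rw [hpow, LinearMap.adjoint_inner_right, LinearMap.adjoint_inner_right]
  simp only [sum_inner, inner_sum]
  simp only [key]
  simp only [Finset.sum_filter]
  exact Finset.sum_comm
end

section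
/- Let N_e, N_n be positive natural numbers. For each j ∈ Fin N_e let B_j and C_j be symmetric real N_n × N_n matrices, let R be a symmetric real N_n × N_n matrix, let G ∈ ℝ^{N_n}, let I : ℝ^{N_n} → ℝ^{N_e} be a linear map with transpose Iᵀ : ℝ^{N_e} → ℝ^{N_n}, and let S ∈ ℝ^{N_e} have strictly positive entries. Define A(κ, μ) = R + Σ_j κ_j B_j + Σ_j μ_j C_j, assume A = A(κ₀, μ₀) is invertible, and set Φ = A⁻¹ G. Equip ℝ^{N_e} with the weighted inner product ⟨u, v⟩_S = Σ_j S_j u_j v_j and ℝ^{N_e} × ℝ^{N_e} with the corresponding product inner product. For H ∈ ℝ^{N_e} define the adjoint field H̃ = −A⁻¹ Iᵀ (S ∘ μ₀ ∘ H), where ∘ is the componentwise product. Then for all perturbations (δκ, δμ), with δΦ = −A⁻¹(Σ_j δκ_j B_j + Σ_j δμ_j C_j)Φ, one has ⟨δμ ∘ (IΦ) + μ₀ ∘ (IδΦ), H⟩_S = ⟨δκ, ρ⟩_S + ⟨δμ, τ⟩_S, where ρ_j = (1/S_j) H̃ᵀ B_j Φ and τ_j = (1/S_j) H̃ᵀ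 C_j Φ + H_j (IΦ)_j. In other words, the map H ↦ (ρ, τ) is the adjoint, with respect to the S-weighted inner products, of the Fréchet derivative of the discrete optical forward map F(κ, μ) = μ ∘ I(A(κ, μ)⁻¹G) at (κ₀, μ₀). -/
/-!
Since `A` is symmetric, so is `A⁻¹`; together with `⟨I u, v⟩ = ⟨u, Iᵀ v⟩` this moves `A⁻¹` and
`I` from the perturbation onto the test vector, giving `⟨μ₀ ∘ I δΦ, H⟩_S = H̃ᵀ δA Φ` with
`δA = ∑ δκ_j B_j + ∑ δμ_j C_j`. The right-hand side is linear in `(δκ, δμ)` with coefficients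
`H̃ᵀ B_j Φ` and `H̃ᵀ C_j Φ`, and the factors `1 / S_j` cancel the weights of the `S`-pairing.
-/

open Matrix

namespace Matrix

variable {α n m ι : Type*} [Fintype ι]

theorem isSymm_sum_smul [CommSemiring α] (c : ι → α) {M : ι → Matrix n n α}
    (hM : ∀ j, (M j).IsSymm) : (∑ j, c j • M j).IsSymm := by
  simp only [IsSymm, transpose_sum, transpose_smul, fun j => (hM j).eq]

theorem IsSymm.mulVec_dotProduct [Fintype n] [CommSemiring α] {A : Matrix n n α} (hA : A.IsSymm)
    (v w : n → α) : (A *ᵥ v) ⬝ᵥ w = v ⬝ᵥ (A *ᵥ w) := by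
  rw [dotProduct_mulVec, ← vecMul_transpose, hA.eq]

theorem IsSymm.map_neg_inv_mulVec_dotProduct [Fintype n] [Fintype m] [DecidableEq n] [CommRing α]
    {A : Matrix n n α} (hA : A.IsSymm) (I : (n → α) →ₗ[α] (m → α))
    (It : (m → α) →ₗ[α] (n → α)) (hIt : ∀ u v, I u ⬝ᵥ v = u ⬝ᵥ It v) (v : n → α)
    (w : m → α) : I (-(A⁻¹ *ᵥ v)) ⬝ᵥ w = (-(A⁻¹ *ᵥ It w)) ⬝ᵥ v := by
  rw [hIt, neg_dotProduct, neg_dotProduct, hA.inv.mulVec_dotProduct, dotProduct_comm]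

theorem dotProduct_sum_smul_mulVec [Fintype n] [CommSemiring α] (u v : n → α) (c : ι → α)
    (M : ι → Matrix n n α) :
    u ⬝ᵥ ((∑ j, c j • M j) *ᵥ v) = ∑ j, c j * (u ⬝ᵥ (M j *ᵥ v)) := by
  simp only [sum_mulVec, dotProduct_sum, smul_mulVec, dotProduct_smul, smul_eq_mul]

end Matrix

theorem discrete_optical_adjoint_formula_general
    (Ne Nn : ℕ)
    (B C : Fin Ne → Matrix (Fin Nn) (Fin Nn) ℝ)
    (hB : ∀ j, (B j).IsSymm) (hC : ∀ j, (C j).IsSymm)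
    (R : Matrix (Fin Nn) (Fin Nn) ℝ) (hR : R.IsSymm)
    (I : (Fin Nn → ℝ) →ₗ[ℝ] (Fin Ne → ℝ))
    (It : (Fin Ne → ℝ) →ₗ[ℝ] (Fin Nn → ℝ))
    (hIt : ∀ (u : Fin Nn → ℝ) (v : Fin Ne → ℝ), (I u) ⬝ᵥ v = u ⬝ᵥ (It v))
    (S : Fin Ne → ℝ) (hS : ∀ j, 0 < S j)
    (A : Matrix (Fin Nn) (Fin Nn) ℝ)
    (κ₀ μ₀ : Fin Ne → ℝ)
    (hAdef : A = R + (∑ j, κ₀ j • B j) + (∑ j, μ₀ j • C j))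
    (Φ : Fin Nn → ℝ)
    (H : Fin Ne → ℝ)
    (Ht : Fin Nn → ℝ) (hHt : Ht = -(A⁻¹ *ᵥ It (S * μ₀ * H))) :
    ∀ δκ δμ : Fin Ne → ℝ,
      (∑ j, S j * ((δμ * I Φ + μ₀ *
          I (-(A⁻¹ *ᵥ (((∑ j, δκ j • B j) + (∑ j, δμ j • C j)) *ᵥ Φ)))) j * H j)) =
        (∑ j, S j * (δκ j * ((1 / S j) * (Ht ⬝ᵥ (B j *ᵥ Φ))))) +
          (∑ j, S j * (δμ j *
            ((1 / S j) * (Ht ⬝ᵥ (C j *ᵥ Φ)) + H j * (I Φ) j))) := by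
  intro δκ δμ
  set δA := (∑ j, δκ j • B j) + (∑ j, δμ j • C j) with hδA
  have hA : A.IsSymm := hAdef ▸ (hR.add (isSymm_sum_smul κ₀ hB)).add (isSymm_sum_smul μ₀ hC)
  have hadjoint : I (-(A⁻¹ *ᵥ (δA *ᵥ Φ))) ⬝ᵥ (S * μ₀ * H) = Ht ⬝ᵥ (δA *ᵥ Φ) :=
    hHt ▸ hA.map_neg_inv_mulVec_dotProduct I It hIt _ _
  have hexpand : Ht ⬝ᵥ (δA *ᵥ Φ) =
      ∑ j, δκ j * (Ht ⬝ᵥ (B j *ᵥ Φ)) + ∑ j, δμ j * (Ht ⬝ᵥ (C j *ᵥ Φ)) := by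
    rw [hδA, add_mulVec, dotProduct_add, dotProduct_sum_smul_mulVec, dotProduct_sum_smul_mulVec]
  calc _ = ∑ j, S j * (δμ j * I Φ j * H j) + (I (-(A⁻¹ *ᵥ (δA *ᵥ Φ))) ⬝ᵥ (S * μ₀ * H) : ℝ) := by
        rw [dotProduct, ← Finset.sum_add_distrib]
        refine Finset.sum_congr rfl fun j _ => ?_
        simp only [Pi.add_apply, Pi.mul_apply]
        ring
    _ = _ := by
        simp only [hadjoint, hexpand, ← Finset.sum_add_distrib]
        refine Finset.sum_congr rfl fun j _ => ?_
        field_simp [(hS j).ne']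
        ring

/-- The adjoint-then-discretise formula (prodtproj) is the adjoint
of the Jacobian of the discrete optical forward map with respect to the `S`-weighted
inner products: with `H̃ = -A⁻¹ Iᵀ (S ∘ μ₀ ∘ H)` and
`δΦ = -A⁻¹(∑ δκ_j B_j + ∑ δμ_j C_j)Φ`, for all `(δκ, δμ)`,
`⟨δμ ∘ IΦ + μ₀ ∘ IδΦ, H⟩_S = ⟨δκ, ρ⟩_S + ⟨δμ, τ⟩_S` where
`ρ_j = (1/S_j) H̃ᵀ B_j Φ` and `τ_j = (1/S_j) H̃ᵀ C_j Φ + H_j (IΦ)_j`. -/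
theorem discrete_optical_adjoint_formula
    (Ne Nn : ℕ) (hNe : 0 < Ne) (hNn : 0 < Nn)
    (B C : Fin Ne → Matrix (Fin Nn) (Fin Nn) ℝ)
    (hB : ∀ j, (B j).IsSymm) (hC : ∀ j, (C j).IsSymm)
    (R : Matrix (Fin Nn) (Fin Nn) ℝ) (hR : R.IsSymm)
    (G : Fin Nn → ℝ)
    (I : (Fin Nn → ℝ) →ₗ[ℝ] (Fin Ne → ℝ))
    (It : (Fin Ne → ℝ) →ₗ[ℝ] (Fin Nn → ℝ))
    (hIt : ∀ (u : Fin Nn → ℝ) (v : Fin Ne → ℝ), (I u) ⬝ᵥ v = u ⬝ᵥ (It v))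
    (S : Fin Ne → ℝ) (hS : ∀ j, 0 < S j)
    (A : Matrix (Fin Nn) (Fin Nn) ℝ)
    (κ₀ μ₀ : Fin Ne → ℝ)
    (hAdef : A = R + (∑ j, κ₀ j • B j) + (∑ j, μ₀ j • C j))
    (hinv : IsUnit A)
    (Φ : Fin Nn → ℝ) (hΦ : Φ = A⁻¹ *ᵥ G)
    (H : Fin Ne → ℝ)
    (Ht : Fin Nn → ℝ) (hHt : Ht = -(A⁻¹ *ᵥ It (S * μ₀ * H))) :
    ∀ δκ δμ : Fin Ne → ℝ,
      (∑ j, S j * ((δμ * I Φ + μ₀ *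
          I (-(A⁻¹ *ᵥ (((∑ j, δκ j • B j) + (∑ j, δμ j • C j)) *ᵥ Φ)))) j * H j)) =
        (∑ j, S j * (δκ j * ((1 / S j) * (Ht ⬝ᵥ (B j *ᵥ Φ))))) +
          (∑ j, S j * (δμ j *
            ((1 / S j) * (Ht ⬝ᵥ (C j *ᵥ Φ)) + H j * (I Φ) j))) :=
  discrete_optical_adjoint_formula_general Ne Nn B C hB hC R hR I It hIt S hS A κ₀ μ₀ hAdef Φ H Ht
    hHt
end

section
/- Let m, n be positive natural numbers, λ ∈ ℝ, C an invertible real m × m matrix, D a real m × n matrix, 𝓗 a real n × n matrix, χ ∈ ℝ^m, d ∈ ℝ^n and b ∈ ℝ^n. Set E = I_m − C χ (D d)ᵀ ∈ ℝ^{m×m}, where χ (D d)ᵀ is the outer product. Then a pair (δχ, δd) ∈ ℝ^m × ℝ^n satisfies the coupled linear system C⁻¹ δχ − E D δd = −(C⁻¹ χ − D d) and λ Dᵀ δχ + 𝓗 δd = −(λ Dᵀ χ + 𝓗 d − b) if and only if δd satisfies the decoupled equation (λ Dᵀ C E D + 𝓗) δd = −λ Dᵀ C D d − 𝓗 d + b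 and δχ = C E D δd − χ + C D d. -/
open Matrix

/-- Block elimination for the PD-IPM linearised primal–dual system:
with `E = I - C χ (Dd)ᵀ`, the coupled system
`C⁻¹ δχ - E D δd = -(C⁻¹ χ - D d)` and `λ Dᵀ δχ + 𝓗 δd = -(λ Dᵀ χ + 𝓗 d - b)`
holds iff `(λ Dᵀ C E D + 𝓗) δd = -λ Dᵀ C D d - 𝓗 d + b` and
`δχ = C E D δd - χ + C D d`. -/
theorem pdipm_block_elimination
    (m n : ℕ) (hm : 0 < m) (hn : 0 < n) (lam : ℝ)
    (C : Matrix (Fin m) (Fin m) ℝ) (hC : IsUnit C)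
    (D : Matrix (Fin m) (Fin n) ℝ) (Hm : Matrix (Fin n) (Fin n) ℝ)
    (χ : Fin m → ℝ) (d : Fin n → ℝ) (b : Fin n → ℝ)
    (E : Matrix (Fin m) (Fin m) ℝ)
    (hE : E = 1 - C * vecMulVec χ (D *ᵥ d))
    (δχ : Fin m → ℝ) (δd : Fin n → ℝ) :
    (C⁻¹ *ᵥ δχ - (E * D) *ᵥ δd = -(C⁻¹ *ᵥ χ - D *ᵥ d) ∧
        lam • (Dᵀ *ᵥ δχ) + Hm *ᵥ δd = -(lam • (Dᵀ *ᵥ χ) + Hm *ᵥ d - b)) ↔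
      ((lam • (Dᵀ * C * E * D) + Hm) *ᵥ δd =
          -(lam • ((Dᵀ * C * D) *ᵥ d)) - Hm *ᵥ d + b ∧
        δχ = (C * E * D) *ᵥ δd - χ + (C * D) *ᵥ d) := by
  have hdet : IsUnit C.det := (Matrix.isUnit_iff_isUnit_det C).mp hC
  have hCC : C * C⁻¹ = 1 := Matrix.mul_nonsing_inv C hdet
  have hC'C : C⁻¹ * C = 1 := Matrix.nonsing_inv_mul C hdet
  have hCv : ∀ v : Fin m → ℝ, C *ᵥ (C⁻¹ *ᵥ v) = v := by
    intro v; rw [Matrix.mulVec_mulVec, hCC, Matrix.one_mulVec]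
  have hC'v : ∀ v : Fin m → ℝ, C⁻¹ *ᵥ (C *ᵥ v) = v := by
    intro v; rw [Matrix.mulVec_mulVec, hC'C, Matrix.one_mulVec]
  have key : (C⁻¹ *ᵥ δχ - (E * D) *ᵥ δd = -(C⁻¹ *ᵥ χ - D *ᵥ d)) ↔
      δχ = (C * E * D) *ᵥ δd - χ + (C * D) *ᵥ d := by
    constructor
    · intro h1
      have h := congrArg (fun v => C *ᵥ v) h1
      simp only [Matrix.mulVec_sub, Matrix.mulVec_add, Matrix.mulVec_neg,
        ← Matrix.mulVec_mulVec, hCv] at h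
      simp only [← Matrix.mulVec_mulVec]
      linear_combination (norm := abel) h
    · intro h2
      have h := congrArg (fun v => C⁻¹ *ᵥ v) h2
      simp only [Matrix.mulVec_sub, Matrix.mulVec_add, Matrix.mulVec_neg,
        ← Matrix.mulVec_mulVec, hC'v] at h
      simp only [← Matrix.mulVec_mulVec]
      linear_combination (norm := abel) h
  rw [key]
  constructor
  · rintro ⟨h2, h1⟩
    refine ⟨?_, h2⟩
    rw [h2] at h1
    rw [Matrix.add_mulVec, Matrix.smul_mulVec]
    simp only [Matrix.mulVec_add, Matrix.mulVec_sub, Matrix.mulVec_mulVec,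
      smul_add, smul_sub, Matrix.mul_assoc] at h1 ⊢
    linear_combination (norm := abel) h1
  · rintro ⟨h1, h2⟩
    refine ⟨h2, ?_⟩
    rw [h2]
    rw [Matrix.add_mulVec, Matrix.smul_mulVec] at h1
    simp only [Matrix.mulVec_add, Matrix.mulVec_sub, Matrix.mulVec_mulVec,
      smul_add, smul_sub, Matrix.mul_assoc] at h1 ⊢
    linear_combination (norm := abel) h1
end
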